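/- Let χ^p_u be a reduced basic cochain of degree n ≥ 2 with u = α₁⋯αₙ ∈ Γⁿ. The admissible cycle C(u,p): M(α_{n−1}) → M(α_{n−2}) → ⋯ → M(α₂) → M(α₁⁻¹ p αₙ⁻¹) → M(α_{n−1}) (with all natural morphisms) is exact at every term except at M(α₁⁻¹ p αₙ⁻¹), and its cohomology at M(α₁⁻¹ p αₙ⁻¹) is isomorphic to M(p). -/

import Mathlib

open scoped Classical

/-- A finite-type-free presentation of a quiver: vertices, arrows, source and target. -/
structure Quiv where
  V : Type
  E : Type
  s : E → V
  t : E → V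

namespace Quiv

variable (Q : Quiv)

/-- A (composable) path, given as the list of its arrows. -/
def IsPath (l : List Q.E) : Prop := l.Chain' (fun a b => Q.t a = Q.s b)

/-- A Γ-path for the set of monomial quadratic relations `R`:
a composable sequence of arrows each consecutive pair of which lies in `R`. -/
def GammaPath (R : Set (List Q.E)) (l : List Q.E) : Prop :=
  l.Chain' (fun a b => Q.t a = Q.s b ∧ [a, b] ∈ R)

/-- The list of arrows `l` starts at the vertex `x`. -/
def StartsAt (x : Q.V) (l : List Q.E) : Prop := ∀ h : l ≠ [], Q.s (l.head h) = x

/-- The list of arrows `l` ends at the vertex `y`. -/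
def EndsAt (y : Q.V) (l : List Q.E) : Prop := ∀ h : l ≠ [], Q.t (l.getLast h) = y

/-- `l` is a path from `x` to `y` (a stationary path when `l = []`). -/
def FromTo (x y : Q.V) (l : List Q.E) : Prop :=
  IsPath Q l ∧ StartsAt Q x l ∧ EndsAt Q y l ∧ (l = [] → x = y)

/-- An allowed path: a composable path no consecutive pair of which lies in the
set of quadratic monomial relations `R`; these are exactly the paths which are
nonzero in the quadratic monomial algebra `kQ/⟨R⟩`. -/
def Allowed (R : Set (List Q.E)) (l : List Q.E) : Prop :=
  l.Chain' (fun a b => Q.t a = Q.s b ∧ [a, b] ∉ R)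

/-- The composition `u ∘_{s,r} v = α₁⋯α_{s-1} β₁⋯βₘ α_r⋯αₙ` of the paths
`u = α₁⋯αₙ` and `v = β₁⋯βₘ` at the (1-indexed) positions `s ≤ r`. -/
def compSR (u v : List Q.E) (s r : ℕ) : List Q.E := u.take (s - 1) ++ v ++ u.drop (r - 1)

/-- The composition `u ∘_s v` at position `s`, i.e. `u ∘_{s,s+1} v`: replace the `s`-th
arrow of `u` by the path `v`. -/
def compS (u v : List Q.E) (s : ℕ) : List Q.E := u.take (s - 1) ++ v ++ u.drop s

/-- `(u,v)` is an `(s,r)` Γ-bypass. -/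
def IsBypassSR (R : Set (List Q.E)) (u v : List Q.E) (s r : ℕ) : Prop :=
  1 ≤ s ∧ s ≤ r ∧ r ≤ u.length ∧ GammaPath Q R (compSR Q u v s r)

/-- `(u,v)` is an `(s,s+1)` Γ-bypass. -/
def IsBypass (R : Set (List Q.E)) (u v : List Q.E) (s : ℕ) : Prop :=
  1 ≤ s ∧ s ≤ u.length ∧ GammaPath Q R (compS Q u v s)

end Quiv

namespace Quiv

/-- A walk in the quiver `Q`: a base vertex together with a list of letters, each letter
being an arrow together with a direction (`true` = direct letter, `false` = inverse
letter). -/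
structure Walk (Q : Quiv) where
  base : Q.V
  letters : List (Q.E × Bool)

namespace Walk

/-- The endpoint of a letter. -/
def nextV (Q : Quiv) (v : Q.V) (l : Q.E × Bool) : Q.V := if l.2 then Q.t l.1 else Q.s l.1

/-- The starting point of a letter. -/
def startV (Q : Quiv) (l : Q.E × Bool) : Q.V := if l.2 then Q.s l.1 else Q.t l.1

variable {Q : Quiv} (W : Walk Q)

/-- The `i`-th vertex of a walk (there are `length + 1` of them). -/
def vtx (i : ℕ) : Q.V := (W.letters.take i).foldl (nextV Q) W.base

/-- The walk is well-formed: each letter starts where the previous one ends. -/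
def OK : Prop := ∀ i : Fin W.letters.length, startV Q (W.letters.get i) = W.vtx i

/-- The walk is reduced: no letter is immediately followed by its formal inverse. -/
def Reduced : Prop :=
  ∀ i, ∀ h : i + 1 < W.letters.length,
    W.letters.get ⟨i + 1, h⟩ ≠
      ((W.letters.get ⟨i, by omega⟩).1, !(W.letters.get ⟨i, by omega⟩).2)

/-- The walk avoids the monomial relations `R`: no contiguous subwalk consisting of
direct letters is a path of `R`, and no contiguous subwalk consisting of inverse letters
is the reverse of a path of `R`. -/
def Avoids (R : Set (List Q.E)) : Prop :=
  ¬ ∃ i m : ℕ, 1 ≤ m ∧ i + m ≤ W.letters.length ∧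
    ((((W.letters.drop i).take m).map Prod.fst ∈ R ∧
        ∀ x ∈ (W.letters.drop i).take m, x.2 = true) ∨
      ((((W.letters.drop i).take m).map Prod.fst).reverse ∈ R ∧
        ∀ x ∈ (W.letters.drop i).take m, x.2 = false))

/-- The walk is a string for the monomial relations `R`. -/
def IsString (R : Set (List Q.E)) : Prop := W.OK ∧ W.Reduced ∧ W.Avoids R

end Walk

/-- The walk consisting of the single direct letter given by an arrow. -/
def arrowWalk (Q : Quiv) (a : Q.E) : Walk Q := ⟨Q.s a, [(a, true)]⟩

/-- The stationary walk at a vertex. -/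
def trivWalk (Q : Quiv) (x : Q.V) : Walk Q := ⟨x, []⟩

/-- A representation of the quiver `Q` over the field `k` (equivalently, a module over
the path algebra; a module over `kQ/I` when the maps of the arrows of a relation of `I`
compose to zero). -/
structure Rep (Q : Quiv) (k : Type) [Field k] where
  carrier : Q.V → Type
  [acg : ∀ v, AddCommGroup (carrier v)]
  [mod : ∀ v, Module k (carrier v)]
  map : ∀ e : Q.E, carrier (Q.s e) →ₗ[k] carrier (Q.t e)

attribute [instance] Rep.acg Rep.mod

/-- A morphism of representations. -/
structure RepHom {Q : Quiv} {k : Type} [Field k] (X Y : Rep Q k) where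
  app : ∀ v, X.carrier v →ₗ[k] Y.carrier v
  comm : ∀ e : Q.E, (Y.map e).comp (app (Q.s e)) = (app (Q.t e)).comp (X.map e)

namespace RepHom

variable {Q : Quiv} {k : Type} [Field k]

/-- Composition of morphisms of representations. -/
def comp {X Y Z : Rep Q k} (g : RepHom Y Z) (f : RepHom X Y) : RepHom X Z where
  app v := (g.app v).comp (f.app v)
  comm e := by
    rw [← LinearMap.comp_assoc, g.comm, LinearMap.comp_assoc, f.comm,
      LinearMap.comp_assoc]

/-- The identity morphism of a representation. -/
def id (X : Rep Q k) : RepHom X X where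
  app v := LinearMap.id
  comm e := by simp

/-- A morphism of representations is an isomorphism when it has a two-sided inverse. -/
def IsIso {X Y : Rep Q k} (f : RepHom X Y) : Prop :=
  ∃ g : RepHom Y X, g.comp f = RepHom.id X ∧ f.comp g = RepHom.id Y

/-- A morphism of representations is nonzero. -/
def NeZero {X Y : Rep Q k} (f : RepHom X Y) : Prop := ∃ v x, f.app v x ≠ 0

end RepHom

/-- A representation is indecomposable: it is nonzero and its only idempotent
endomorphisms are `0` and the identity. -/
def Indecomposable {Q : Quiv} {k : Type} [Field k] (X : Rep Q k) : Prop :=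
  (∃ v, ∃ x : X.carrier v, x ≠ 0) ∧
    ∀ f : RepHom X X, f.comp f = f → (∀ v x, f.app v x = 0) ∨ f = RepHom.id X

/-- The string module `M(w)` of a walk `w`: at the vertex `v` it has one basis element
for every vertex position of the walk lying at `v`, and an arrow acts by the sum of the
identity maps prescribed by the letters of the walk in which it appears. -/
noncomputable def StringMod (k : Type) [Field k] (Q : Quiv) (W : Walk Q) : Rep Q k where
  carrier v := {i : Fin (W.letters.length + 1) // W.vtx (i : ℕ) = v} → k
  map e :=
    ∑ i : Fin W.letters.length,
      ((if h : W.letters.get i = (e, true) ∧ W.vtx (i : ℕ) = Q.s e ∧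
            W.vtx ((i : ℕ) + 1) = Q.t e then
          (LinearMap.single k (fun _ => k) ⟨i.succ, by simpa using h.2.2⟩).comp
            (LinearMap.proj ⟨i.castSucc, by simpa using h.2.1⟩)
        else 0)
      + (if h : W.letters.get i = (e, false) ∧ W.vtx ((i : ℕ) + 1) = Q.s e ∧
            W.vtx (i : ℕ) = Q.t e then
          (LinearMap.single k (fun _ => k) ⟨i.castSucc, by simpa using h.2.2⟩).comp
            (LinearMap.proj ⟨i.succ, by simpa using h.2.1⟩)
        else 0))

/-- The natural "top-to-socle" morphisms between string modules: `φ` is the morphism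
whose matrix has a single nonzero entry, equal to `1`, between the basis vector at the
walk position `posSrc` of the source and the one at the walk position `posTgt` of the
target. -/
def IsEntryMap {Q : Quiv} {k : Type} [Field k] (Wb Wa : Walk Q) (posSrc posTgt : ℕ)
    (φ : RepHom (StringMod k Q Wb) (StringMod k Q Wa)) : Prop :=
  ∀ v (x : (StringMod k Q Wb).carrier v) jp, φ.app v x jp =
    if (jp.1 : ℕ) = posTgt then
      (∑ ip, if (ip.1 : ℕ) = posSrc then x ip else 0)
    else 0

end Quiv

namespace Quiv

/-- The walk `a⁻¹ p z⁻¹` obtained by concatenating the inverse of the arrow `a`, the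
(direct) path `p`, and the inverse of the arrow `z`; for `u = α₁⋯αₙ` and `a = α₁`,
`z = αₙ`, this is the walk `α₁⁻¹ p αₙ⁻¹` underlying the non-uniserial module of an
admissible cycle. -/
def bigWalk (Q : Quiv) (a z : Q.E) (p : List Q.E) : Walk Q :=
  ⟨Q.t a, (a, false) :: (p.map (fun b => (b, true)) ++ [(z, false)])⟩

/-- The walk underlying the string module `M(p)` of a (direct) path `p` from `x`. -/
def pathWalk (Q : Quiv) (x : Q.V) (p : List Q.E) : Walk Q :=
  ⟨x, p.map (fun b => (b, true))⟩

/-- The walk `p z⁻¹` obtained by concatenating the (direct) path `p` from `x` and the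
inverse of the arrow `z`. -/
def pathInvWalk (Q : Quiv) (x : Q.V) (p : List Q.E) (z : Q.E) : Walk Q :=
  ⟨x, p.map (fun b => (b, true)) ++ [(z, false)]⟩

/-- The data `(u, p)` of a reduced basic cochain `χ^p_u`: `u` is a Γ-path from `x` to
`y`, `p` is a parallel path which is nonzero in `A` (i.e. avoids the relations), `p` does
not start with the first arrow of `u` and does not end with the last arrow of `u`. -/
def IsReducedBasic (Q : Quiv) (R : Set (List Q.E)) (x y : Q.V) (u p : List Q.E) : Prop :=
  Q.GammaPath R u ∧ Q.FromTo x y u ∧ Q.Allowed R p ∧ Q.FromTo x y p ∧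
    (∀ (hp : p ≠ []) (hu : u ≠ []), p.head hp ≠ u.head hu) ∧
    (∀ (hp : p ≠ []) (hu : u ≠ []), p.getLast hp ≠ u.getLast hu)

end Quiv

namespace Quiv

/-- The `j`-th walk (cyclically) of the admissible cycle `C(u,p)` associated with a
reduced basic cochain `χ^p_u`, `u` of length `n ≥ 2`: the cycle
`M(α₁⁻¹pαₙ⁻¹) → M(α_{n-1}) → M(α_{n-2}) → ⋯ → M(α₂) → M(α₁⁻¹pαₙ⁻¹)` has period `n-1`,
position `0` carrying the walk `α₁⁻¹ p αₙ⁻¹` and position `j` (for `1 ≤ j ≤ n-2`)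
carrying the one-arrow walk of `α_{n-j}`. -/
def cycWalk (Q : Quiv) (u p : List Q.E) (hu : u ≠ []) (n j : ℕ) : Walk Q :=
  if j % (n - 1) = 0 then bigWalk Q (u.head hu) (u.getLast hu) p
  else arrowWalk Q (u.getD (n - 1 - (j % (n - 1))) (u.head hu))

/-- The position, in the `j`-th walk of the admissible cycle, of the top basis vector
through which the `j`-th natural morphism of the cycle factors. -/
def cycPosSrc (Q : Quiv) (p : List Q.E) (n j : ℕ) : ℕ :=
  if j % (n - 1) = 0 then p.length + 2 else 0

/-- The position, in the `(j+1)`-st walk of the admissible cycle, of the socle basis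
vector through which the `j`-th natural morphism of the cycle factors. -/
def cycPosTgt (Q : Quiv) (n j : ℕ) : ℕ := if (j + 1) % (n - 1) = 0 then 0 else 1

end Quiv

namespace Quiv

open Quiv.Walk

variable {Q : Quiv} {k : Type} [Field k]

/-- Positions of a walk at a vertex. -/
abbrev Pos (W : Walk Q) (v : Q.V) := {i : Fin (W.letters.length + 1) // W.vtx (i : ℕ) = v}

lemma carrier_def (W : Walk Q) (v : Q.V) :
    (StringMod k Q W).carrier v = (Pos W v → k) := rfl

/-- collapse of the indicator sum at an existing position -/
lemma sum_collapse {W : Walk Q} {v : Q.V} (x : Pos W v → k) (c : ℕ)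
    (ip : Pos W v) (hip : (ip.1 : ℕ) = c) :
    (∑ jp : Pos W v, if (jp.1 : ℕ) = c then x jp else 0) = x ip := by
  rw [Fintype.sum_eq_single ip]
  · simp [hip]
  · intro b hb
    rw [if_neg]
    intro hbc
    exact hb (Subtype.ext (Fin.ext (by omega)))

lemma sum_collapse_zero {W : Walk Q} {v : Q.V} (x : Pos W v → k) (c : ℕ)
    (h : ∀ ip : Pos W v, (ip.1 : ℕ) = c → x ip = 0) :
    (∑ jp : Pos W v, if (jp.1 : ℕ) = c then x jp else 0) = 0 := by
  apply Finset.sum_eq_zero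
  intro ip _
  split
  · exact h ip (by assumption)
  · rfl

/-- The linear map underlying an entry morphism. -/
noncomputable def entryApp (Wb Wa : Walk Q) (ps pt : ℕ) (v : Q.V) :
    (Pos Wb v → k) →ₗ[k] (Pos Wa v → k) where
  toFun x jp := if (jp.1 : ℕ) = pt then (∑ ip, if (ip.1 : ℕ) = ps then x ip else 0) else 0
  map_add' x y := by
    funext jp
    by_cases h : (jp.1 : ℕ) = pt
    · simp only [Pi.add_apply, if_pos h, ← Finset.sum_add_distrib]
      apply Finset.sum_congr rfl
      intro ip _
      split <;> simp
    · simp only [Pi.add_apply, if_neg h, add_zero]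
  map_smul' c x := by
    funext jp
    by_cases h : (jp.1 : ℕ) = pt
    · simp only [Pi.smul_apply, RingHom.id_apply, if_pos h, Finset.smul_sum]
      apply Finset.sum_congr rfl
      intro ip _
      split <;> simp
    · simp only [Pi.smul_apply, RingHom.id_apply, if_neg h, smul_zero]


lemma entryApp_apply {Wb Wa : Walk Q} {ps pt : ℕ} {v : Q.V} (x : Pos Wb v → k)
    (jp : Pos Wa v) :
    entryApp Wb Wa ps pt v x jp =
      if (jp.1 : ℕ) = pt then (∑ ip, if (ip.1 : ℕ) = ps then x ip else 0) else 0 := rfl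

lemma entryApp_eq_zero {Wb Wa : Walk Q} {ps pt : ℕ} {v : Q.V} {z : Pos Wb v → k}
    (h : ∀ ip : Pos Wb v, (ip.1 : ℕ) = ps → z ip = 0) :
    entryApp Wb Wa ps pt v z = 0 := by
  funext jp
  rw [entryApp_apply, sum_collapse_zero z ps h]
  simp

/-- The arrow action of a string module, typed on position functions. -/
noncomputable def mapSum (W : Walk Q) (e : Q.E) :
    (Pos W (Q.s e) → k) →ₗ[k] (Pos W (Q.t e) → k) :=
  ∑ i : Fin W.letters.length,
    ((if h : W.letters.get i = (e, true) ∧ W.vtx (i : ℕ) = Q.s e ∧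
          W.vtx ((i : ℕ) + 1) = Q.t e then
        (LinearMap.single k (fun _ => k) ⟨i.succ, by simpa using h.2.2⟩).comp
          (LinearMap.proj ⟨i.castSucc, by simpa using h.2.1⟩)
      else 0)
    + (if h : W.letters.get i = (e, false) ∧ W.vtx ((i : ℕ) + 1) = Q.s e ∧
          W.vtx (i : ℕ) = Q.t e then
        (LinearMap.single k (fun _ => k) ⟨i.castSucc, by simpa using h.2.2⟩).comp
          (LinearMap.proj ⟨i.succ, by simpa using h.2.1⟩)
      else 0))

/-- Entry morphism: top condition at `ps`, socle condition at `pt`. -/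
noncomputable def entryHom (Wb Wa : Walk Q) (ps pt : ℕ)
    (htop : ∀ i : Fin Wb.letters.length,
      ((i:ℕ)+1 = ps → (Wb.letters.get i).2 = false) ∧
      ((i:ℕ) = ps → (Wb.letters.get i).2 = true))
    (hsoc : ∀ i : Fin Wa.letters.length,
      ((i:ℕ) = pt → (Wa.letters.get i).2 = false) ∧
      ((i:ℕ)+1 = pt → (Wa.letters.get i).2 = true)) :
    RepHom (StringMod k Q Wb) (StringMod k Q Wa) where
  app v := entryApp Wb Wa ps pt v
  comm e := by
    apply LinearMap.ext; intro xx; funext jp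
    show mapSum Wa e (entryApp Wb Wa ps pt (Q.s e) xx) jp =
      entryApp Wb Wa ps pt (Q.t e) (mapSum Wb e xx) jp
    change Pos Wb (Q.s e) → k at xx
    simp only [mapSum, LinearMap.sum_apply, LinearMap.add_apply]
    rw [Finset.sum_apply, map_sum, Finset.sum_apply]
    refine Eq.trans (Finset.sum_eq_zero fun i _ => ?_) (Eq.symm (Finset.sum_eq_zero fun i _ => ?_))
    · rw [Pi.add_apply]
      have hA : ∀ (h : Wa.letters.get i = (e, true) ∧ Wa.vtx (i : ℕ) = Q.s e ∧
            Wa.vtx ((i : ℕ) + 1) = Q.t e),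
          (LinearMap.single k (fun _ => k) (⟨i.succ, by simpa using h.2.2⟩ : Pos Wa (Q.t e)) ∘ₗ
            LinearMap.proj (⟨i.castSucc, by simpa using h.2.1⟩ : Pos Wa (Q.s e)))
            (entryApp Wb Wa ps pt (Q.s e) xx) jp = 0 := by
        intro h
        rw [LinearMap.comp_apply, LinearMap.proj_apply]
        have hz : entryApp Wb Wa ps pt (Q.s e) xx ⟨i.castSucc, by simpa using h.2.1⟩ = 0 := by
          rw [entryApp_apply, if_neg]
          intro hpt
          have := (hsoc i).1 (by simpa using hpt)
          rw [h.1] at this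
          simp at this
        rw [hz]
        simp
      have hB : ∀ (h : Wa.letters.get i = (e, false) ∧ Wa.vtx ((i : ℕ) + 1) = Q.s e ∧
            Wa.vtx (i : ℕ) = Q.t e),
          (LinearMap.single k (fun _ => k) (⟨i.castSucc, by simpa using h.2.2⟩ : Pos Wa (Q.t e)) ∘ₗ
            LinearMap.proj (⟨i.succ, by simpa using h.2.1⟩ : Pos Wa (Q.s e)))
            (entryApp Wb Wa ps pt (Q.s e) xx) jp = 0 := by
        intro h
        rw [LinearMap.comp_apply, LinearMap.proj_apply]
        have hz : entryApp Wb Wa ps pt (Q.s e) xx ⟨i.succ, by simpa using h.2.1⟩ = 0 := by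
          rw [entryApp_apply, if_neg]
          intro hpt
          have := (hsoc i).2 (by simpa using hpt)
          rw [h.1] at this
          simp at this
        rw [hz]
        simp
      split
      case isTrue h =>
        rw [hA h]
        split
        case isTrue h' => rw [hB h']; simp
        case isFalse h' => simp
      case isFalse h =>
        split
        case isTrue h' => rw [hB h']; simp
        case isFalse h' => simp
    · rw [map_add, Pi.add_apply]
      have hA : ∀ (h : Wb.letters.get i = (e, true) ∧ Wb.vtx (i : ℕ) = Q.s e ∧
            Wb.vtx ((i : ℕ) + 1) = Q.t e),
          entryApp Wb Wa ps pt (Q.t e)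
            ((LinearMap.single k (fun _ => k) (⟨i.succ, by simpa using h.2.2⟩ : Pos Wb (Q.t e)) ∘ₗ
              LinearMap.proj (⟨i.castSucc, by simpa using h.2.1⟩ : Pos Wb (Q.s e))) xx) jp
            = 0 := by
        intro h
        rw [LinearMap.comp_apply]
        rw [entryApp_eq_zero]
        · simp
        · intro ip hip
          rw [LinearMap.coe_single]
          apply Pi.single_eq_of_ne
          intro heq
          have hip' : (ip.1 : ℕ) = (i : ℕ) + 1 := by rw [heq]; simp
          have := (htop i).1 (by omega)
          rw [h.1] at this
          simp at this
      have hB : ∀ (h : Wb.letters.get i = (e, false) ∧ Wb.vtx ((i : ℕ) + 1) = Q.s e ∧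
            Wb.vtx (i : ℕ) = Q.t e),
          entryApp Wb Wa ps pt (Q.t e)
            ((LinearMap.single k (fun _ => k) (⟨i.castSucc, by simpa using h.2.2⟩ : Pos Wb (Q.t e)) ∘ₗ
              LinearMap.proj (⟨i.succ, by simpa using h.2.1⟩ : Pos Wb (Q.s e))) xx) jp
            = 0 := by
        intro h
        rw [LinearMap.comp_apply]
        rw [entryApp_eq_zero]
        · simp
        · intro ip hip
          rw [LinearMap.coe_single]
          apply Pi.single_eq_of_ne
          intro heq
          have hip' : (ip.1 : ℕ) = (i : ℕ) := by rw [heq]; simp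
          have := (htop i).2 (by omega)
          rw [h.1] at this
          simp at this
      have hz0 : entryApp Wb Wa ps pt (Q.t e) (0 : Pos Wb (Q.t e) → k) jp = 0 := by rw [map_zero]; rfl
      split
      case isTrue h =>
        split
        case isTrue h' => exact (congrArg₂ (· + ·) (hA h) (hB h')).trans (add_zero 0)
        case isFalse h' => exact (congrArg₂ (· + ·) (hA h) hz0).trans (add_zero 0)
      case isFalse h =>
        split
        case isTrue h' => exact (congrArg₂ (· + ·) hz0 (hB h')).trans (add_zero 0)
        case isFalse h' => exact (congrArg₂ (· + ·) hz0 hz0).trans (add_zero 0)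


section Submods

variable (W : Walk Q) (v : Q.V) (c : ℕ)

/-- Functions supported at walk position `c`. -/
noncomputable def suppAt : Submodule k (Pos W v → k) where
  carrier := {y | ∀ jp : Pos W v, (jp.1 : ℕ) ≠ c → y jp = 0}
  add_mem' := by
    intro a b ha hb jp h
    rw [Pi.add_apply, ha jp h, hb jp h, add_zero]
  zero_mem' := by intro jp h; rfl
  smul_mem' := by
    intro r y hy jp h
    rw [Pi.smul_apply, hy jp h, smul_zero]

/-- Functions vanishing at walk position `c`. -/
noncomputable def vanAt : Submodule k (Pos W v → k) where
  carrier := {y | ∀ jp : Pos W v, (jp.1 : ℕ) = c → y jp = 0}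
  add_mem' := by
    intro a b ha hb jp h
    rw [Pi.add_apply, ha jp h, hb jp h, add_zero]
  zero_mem' := by intro jp h; rfl
  smul_mem' := by
    intro r y hy jp h
    rw [Pi.smul_apply, hy jp h, smul_zero]

variable {W v c}

lemma mem_suppAt {y : Pos W v → k} :
    y ∈ suppAt W v c ↔ ∀ jp : Pos W v, (jp.1 : ℕ) ≠ c → y jp = 0 := Iff.rfl

lemma mem_vanAt {y : Pos W v → k} :
    y ∈ vanAt W v c ↔ ∀ jp : Pos W v, (jp.1 : ℕ) = c → y jp = 0 := Iff.rfl

lemma suppAt_le_vanAt {c' : ℕ} (h : c' ≠ c) : suppAt W v c ≤ vanAt (k := k) W v c' := by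
  intro y hy ip hip
  exact hy ip (by rw [hip]; exact h)

end Submods

lemma entryHom_app (Wb Wa : Walk Q) (ps pt : ℕ) (h1) (h2) (v : Q.V) :
    (entryHom (k := k) Wb Wa ps pt h1 h2).app v = entryApp Wb Wa ps pt v := rfl

lemma range_entry (Wb Wa : Walk Q) (ps pt : ℕ) (h1) (h2)
    (hps : ps < Wb.letters.length + 1) (hpt : pt < Wa.letters.length + 1)
    (hv : Wb.vtx ps = Wa.vtx pt) (v : Q.V) :
    LinearMap.range ((entryHom (k := k) Wb Wa ps pt h1 h2).app v) = suppAt Wa v pt := by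
  show LinearMap.range (entryApp (k := k) Wb Wa ps pt v) = _
  ext y
  rw [LinearMap.mem_range, mem_suppAt]
  constructor
  · rintro ⟨xx, rfl⟩ jp hjp
    exact (entryApp_apply xx jp).trans (if_neg hjp)
  · intro hy
    by_cases hvv : Wa.vtx pt = v
    · refine ⟨fun ip => if (ip.1 : ℕ) = ps then y ⟨⟨pt, hpt⟩, hvv⟩ else 0, ?_⟩
      funext jp
      refine (entryApp_apply _ jp).trans ?_
      by_cases hjp : (jp.1 : ℕ) = pt
      · rw [if_pos hjp,
          sum_collapse _ ps ⟨⟨ps, hps⟩, hv.trans hvv⟩ rfl, if_pos rfl]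
        congr 1
        exact Subtype.ext (Fin.ext hjp.symm)
      · rw [if_neg hjp, (hy jp hjp)]
    · refine ⟨0, ?_⟩
      funext jp
      refine (entryApp_apply _ jp).trans ?_
      have hz : (∑ ip : Pos Wb v, if (ip.1 : ℕ) = ps then (0 : Pos Wb v → k) ip else 0) = 0 :=
        sum_collapse_zero _ ps (fun ip _ => rfl)
      have hyz : y jp = 0 := by
        refine hy jp ?_
        intro hjp
        exact hvv (by rw [← hjp]; exact jp.2)
      rw [hz, hyz]
      simp

lemma ker_entry (Wb Wa : Walk Q) (ps pt : ℕ) (h1) (h2)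
    (hps : ps < Wb.letters.length + 1) (hpt : pt < Wa.letters.length + 1)
    (hv : Wb.vtx ps = Wa.vtx pt) (v : Q.V) :
    LinearMap.ker ((entryHom (k := k) Wb Wa ps pt h1 h2).app v) = vanAt Wb v ps := by
  show LinearMap.ker (entryApp (k := k) Wb Wa ps pt v) = _
  ext xx
  rw [LinearMap.mem_ker, mem_vanAt]
  constructor
  · intro hx ip hip
    have hvv : Wa.vtx pt = v := by
      rw [← hv, ← hip]
      exact ip.2
    have h3 : (if ((⟨pt, hpt⟩ : Fin (Wa.letters.length + 1)) : ℕ) = pt then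
        (∑ ip' : Pos Wb v, if (ip'.1 : ℕ) = ps then xx ip' else 0) else 0) = 0 :=
      congrFun hx (⟨⟨pt, hpt⟩, hvv⟩ : Pos Wa v)
    rw [if_pos rfl, sum_collapse xx ps ip hip] at h3
    exact h3
  · intro hx
    funext jp
    refine (entryApp_apply _ jp).trans ?_
    rw [sum_collapse_zero xx ps hx, ite_self]
    rfl


section Vtx

lemma arrow_letters (α : Q.E) : (arrowWalk Q α).letters = [(α, true)] := rfl

lemma arrow_len (α : Q.E) : (arrowWalk Q α).letters.length = 1 := rfl

lemma arrow_vtx0 (α : Q.E) : (arrowWalk Q α).vtx 0 = Q.s α := rfl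

lemma arrow_vtx1 (α : Q.E) : (arrowWalk Q α).vtx 1 = Q.t α := by
  simp [Walk.vtx, arrowWalk, Walk.nextV]

lemma big_len (a z : Q.E) (p : List Q.E) :
    (Q.bigWalk a z p).letters.length = p.length + 2 := by
  simp [bigWalk]

lemma path_len (x : Q.V) (p : List Q.E) :
    (Q.pathWalk x p).letters.length = p.length := by
  simp [pathWalk]

lemma big_vtx0 (a z : Q.E) (p : List Q.E) : (Q.bigWalk a z p).vtx 0 = Q.t a := rfl

lemma big_vtx_mid (a z : Q.E) (p : List Q.E) {x : Q.V} (hx : Q.s a = x) {i : ℕ}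
    (hi : i ≤ p.length) :
    (Q.bigWalk a z p).vtx (i + 1) = (Q.pathWalk x p).vtx i := by
  unfold Walk.vtx bigWalk pathWalk
  rw [List.take_succ_cons, List.foldl_cons]
  rw [List.take_append_of_le_length (by simpa using hi)]
  have : Walk.nextV Q (Q.t a) (a, false) = x := by simpa [Walk.nextV] using hx
  rw [this]

lemma big_vtx_last (a z : Q.E) (p : List Q.E) :
    (Q.bigWalk a z p).vtx (p.length + 2) = Q.s z := by
  unfold Walk.vtx bigWalk
  rw [List.take_of_length_le (by simp)]
  rw [List.foldl_cons, List.foldl_append]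
  simp [Walk.nextV]

end Vtx

section Conds

lemma htop_arrow (α : Q.E) :
    ∀ i : Fin (arrowWalk Q α).letters.length,
      ((i : ℕ) + 1 = 0 → ((arrowWalk Q α).letters.get i).2 = false) ∧
      ((i : ℕ) = 0 → ((arrowWalk Q α).letters.get i).2 = true) := by
  rintro ⟨iv, hiv⟩
  constructor
  · intro h; omega
  · intro h
    simp only at h
    subst h
    rfl

lemma hsoc_arrow (α : Q.E) :
    ∀ i : Fin (arrowWalk Q α).letters.length,
      ((i : ℕ) = 1 → ((arrowWalk Q α).letters.get i).2 = false) ∧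
      ((i : ℕ) + 1 = 1 → ((arrowWalk Q α).letters.get i).2 = true) := by
  rintro ⟨iv, hiv⟩
  have h2 : iv < 1 := lt_of_lt_of_eq hiv (arrow_len α)
  constructor
  · intro h; simp only at h; omega
  · intro h
    simp only at h
    have : iv = 0 := by omega
    subst this
    rfl

lemma htop_big (a z : Q.E) (p : List Q.E) :
    ∀ i : Fin (Q.bigWalk a z p).letters.length,
      ((i : ℕ) + 1 = p.length + 2 → ((Q.bigWalk a z p).letters.get i).2 = false) ∧
      ((i : ℕ) = p.length + 2 → ((Q.bigWalk a z p).letters.get i).2 = true) := by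
  rintro ⟨iv, hiv⟩
  have hL : iv < p.length + 2 := lt_of_lt_of_eq hiv (big_len a z p)
  constructor
  · intro h1
    simp only at h1
    have hi : iv = p.length + 1 := by omega
    subst hi
    simp only [List.get_eq_getElem]
    show (((a, false) :: (p.map (fun b => (b, true)) ++ [(z, false)]))[p.length + 1]'
      (by simp)).2 = false
    rw [List.getElem_cons_succ]
    rw [List.getElem_append_right (by simp)]
    simp
  · intro h2; simp only at h2; omega

lemma hsoc_big (a z : Q.E) (p : List Q.E) :
    ∀ i : Fin (Q.bigWalk a z p).letters.length,
      ((i : ℕ) = 0 → ((Q.bigWalk a z p).letters.get i).2 = false) ∧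
      ((i : ℕ) + 1 = 0 → ((Q.bigWalk a z p).letters.get i).2 = true) := by
  rintro ⟨iv, hiv⟩
  constructor
  · intro h1
    simp only at h1
    subst h1
    rfl
  · intro h2; omega

lemma supp_eq_van_arrow (α : Q.E) (v : Q.V) :
    suppAt (k := k) (arrowWalk Q α) v 1 = vanAt (arrowWalk Q α) v 0 := by
  ext y
  rw [mem_suppAt, mem_vanAt]
  constructor
  · intro h jp hjp
    exact h jp (by omega)
  · intro h jp hjp
    have h2 : (jp.1 : ℕ) < 2 :=
      lt_of_lt_of_eq jp.1.isLt (by rw [arrow_len])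
    exact h jp (by omega)

end Conds


lemma mod_succ (j m : ℕ) (hm : 0 < m) :
    (j + 1) % m = if j % m + 1 = m then 0 else j % m + 1 := by
  by_cases h : j % m + 1 = m
  · rw [if_pos h]
    have h0 := Nat.div_add_mod j m
    have h1 : j + 1 = m * (j / m + 1) := by rw [Nat.mul_succ]; omega
    rw [h1, Nat.mul_mod_right]
  · rw [if_neg h]
    have hlt : j % m < m := Nat.mod_lt _ hm
    have hm2 : 2 ≤ m := by
      rcases m with _ | _ | m
      · omega
      · exact absurd (by omega : j % 1 + 1 = 1) h
      · omega
    have h1 : 1 % m = 1 := Nat.mod_eq_of_lt (by omega)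
    rw [Nat.add_mod, h1, Nat.mod_eq_of_lt (by omega)]

/-- Embedding of path positions into bigWalk positions. -/
def embPos (a z : Q.E) (p : List Q.E) {x : Q.V} (hx : Q.s a = x) (v : Q.V)
    (i : Pos (Q.pathWalk x p) v) : Pos (Q.bigWalk a z p) v :=
  ⟨⟨(i.1 : ℕ) + 1, by
      have h := lt_of_lt_of_eq i.1.isLt (congrArg (· + 1) (path_len x p))
      rw [big_len]; omega⟩, by
      have h := lt_of_lt_of_eq i.1.isLt (congrArg (· + 1) (path_len x p))
      show (Q.bigWalk a z p).vtx ((i.1 : ℕ) + 1) = v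
      rw [big_vtx_mid a z p hx (by omega)]
      exact i.2⟩

noncomputable def quotPhi (a z : Q.E) (p : List Q.E) {x : Q.V} (hx : Q.s a = x) (v : Q.V) :
    (vanAt (k := k) (Q.bigWalk a z p) v (p.length + 2)) →ₗ[k]
      ((StringMod k Q (Q.pathWalk x p)).carrier v) where
  toFun xk i := xk.1 (embPos a z p hx v i)
  map_add' α β := rfl
  map_smul' c α := rfl

lemma quot_iso (a z : Q.E) (p : List Q.E) {x : Q.V} (hx : Q.s a = x) (v : Q.V) :
    Nonempty ((vanAt (k := k) (Q.bigWalk a z p) v (p.length + 2) ⧸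
        Submodule.comap (vanAt (k := k) (Q.bigWalk a z p) v (p.length + 2)).subtype
          (suppAt (Q.bigWalk a z p) v 0)) ≃ₗ[k]
      (StringMod k Q (Q.pathWalk x p)).carrier v) := by
  have hv1 : ∀ ip : Pos (Q.bigWalk a z p) v, 1 ≤ (ip.1 : ℕ) → (ip.1 : ℕ) ≤ p.length + 1 →
      (Q.pathWalk x p).vtx ((ip.1 : ℕ) - 1) = v := by
    intro ip hip1 hip2
    have h3 := big_vtx_mid a z p hx (i := (ip.1 : ℕ) - 1) (by omega)
    rw [show (ip.1 : ℕ) - 1 + 1 = (ip.1 : ℕ) by omega] at h3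
    rw [← h3]
    exact ip.2
  have hsurj : Function.Surjective (quotPhi (k := k) a z p hx v) := by
    intro w
    refine ⟨⟨fun ip => if h : 1 ≤ (ip.1 : ℕ) ∧ (ip.1 : ℕ) ≤ p.length + 1 then
        w ⟨⟨(ip.1 : ℕ) - 1, by rw [path_len]; omega⟩, hv1 ip h.1 h.2⟩ else 0, ?_⟩, ?_⟩
    · intro ip hip
      beta_reduce
      rw [dif_neg (by omega)]
    · funext i
      show (fun ip : Pos (Q.bigWalk a z p) v =>
          if h : 1 ≤ (ip.1 : ℕ) ∧ (ip.1 : ℕ) ≤ p.length + 1 then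
            w ⟨⟨(ip.1 : ℕ) - 1, by rw [path_len]; omega⟩, hv1 ip h.1 h.2⟩ else 0)
          (embPos a z p hx v i) = w i
      beta_reduce
      rw [dif_pos (⟨by
        show 1 ≤ ((embPos a z p hx v i).1 : ℕ)
        show 1 ≤ (i.1 : ℕ) + 1
        omega, by
        have h := lt_of_lt_of_eq i.1.isLt (congrArg (· + 1) (path_len x p))
        show ((embPos a z p hx v i).1 : ℕ) ≤ p.length + 1
        show (i.1 : ℕ) + 1 ≤ p.length + 1
        omega⟩)]
      exact congrArg w (Subtype.ext (Fin.ext (by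
        show ((embPos a z p hx v i).1 : ℕ) - 1 = (i.1 : ℕ)
        show (i.1 : ℕ) + 1 - 1 = (i.1 : ℕ)
        omega)))
  have hker : LinearMap.ker (quotPhi (k := k) a z p hx v) =
      Submodule.comap (vanAt (k := k) (Q.bigWalk a z p) v (p.length + 2)).subtype
        (suppAt (Q.bigWalk a z p) v 0) := by
    ext xk
    rw [LinearMap.mem_ker, Submodule.mem_comap]
    constructor
    · intro h
      intro jp hjp
      by_cases hL : (jp.1 : ℕ) = p.length + 2
      · exact xk.2 jp hL
      · have hb : (jp.1 : ℕ) < p.length + 3 :=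
          lt_of_lt_of_eq jp.1.isLt (by rw [big_len])
        have h1 : 1 ≤ (jp.1 : ℕ) := by omega
        have h2 : (jp.1 : ℕ) ≤ p.length + 1 := by omega
        have h3 : xk.1 (embPos a z p hx v
            ⟨⟨(jp.1 : ℕ) - 1, by rw [path_len]; omega⟩, hv1 jp h1 h2⟩) = 0 :=
          congrFun h ⟨⟨(jp.1 : ℕ) - 1, by rw [path_len]; omega⟩, hv1 jp h1 h2⟩
        have h4 : embPos a z p hx v
            ⟨⟨(jp.1 : ℕ) - 1, by rw [path_len]; omega⟩, hv1 jp h1 h2⟩ = jp := by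
          refine Subtype.ext (Fin.ext ?_)
          show (jp.1 : ℕ) - 1 + 1 = (jp.1 : ℕ)
          omega
        rw [h4] at h3
        exact h3
    · intro h
      funext i
      show xk.1 (embPos a z p hx v i) = 0
      exact h (embPos a z p hx v i) (by
        show ((embPos a z p hx v i).1 : ℕ) ≠ 0
        show (i.1 : ℕ) + 1 ≠ 0
        omega)
  exact ⟨(Submodule.quotEquivOfEq _ _ hker.symm).trans
    (LinearMap.quotKerEquivOfSurjective _ hsurj)⟩

end Quiv
open Quiv Quiv.Walk in
/-- Let `χ^p_u` be a reduced basic cochain of degree `n ≥ 2`,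
`u = α₁⋯αₙ ∈ Γⁿ(x,y)`. The admissible cycle
`C(u,p) : M(α_{n-1}) → ⋯ → M(α₂) → M(α₁⁻¹ p αₙ⁻¹) → M(α_{n-1})` of natural morphisms is
exact at every term except at `M(α₁⁻¹ p αₙ⁻¹)`, and its cohomology at
`M(α₁⁻¹ p αₙ⁻¹)` is isomorphic to `M(p)`. -/
theorem admissibleCycle_exact_and_cohomology
    (Q : Quiv) (R : Set (List Q.E)) (hR : ∀ l ∈ R, l.length = 2)
    (k : Type) [Field k]
    (x y : Q.V) (u p : List Q.E) (n : ℕ)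
    (hred : Q.IsReducedBasic R x y u p)
    (hlen : u.length = n) (hn : 2 ≤ n) :
    ∃ t : ∀ j : ℕ,
        RepHom
          (StringMod k Q (Q.cycWalk u p (List.ne_nil_of_length_pos (by omega)) n j))
          (StringMod k Q
            (Q.cycWalk u p (List.ne_nil_of_length_pos (by omega)) n (j + 1))),
      (∀ j, IsEntryMap _ _ (Q.cycPosSrc p n j) (Q.cycPosTgt n j) (t j)) ∧
      (∀ (j : ℕ) (v : Q.V), ¬ (n - 1) ∣ (j + 1) →
        LinearMap.range ((t j).app v) = LinearMap.ker ((t (j + 1)).app v)) ∧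
      (∀ (j : ℕ) (v : Q.V), (n - 1) ∣ (j + 1) →
        LinearMap.range ((t j).app v) ≤ LinearMap.ker ((t (j + 1)).app v) ∧
        Nonempty
          ((LinearMap.ker ((t (j + 1)).app v) ⧸
              Submodule.comap (LinearMap.ker ((t (j + 1)).app v)).subtype
                (LinearMap.range ((t j).app v))) ≃ₗ[k]
            (StringMod k Q (Q.pathWalk x p)).carrier v)) := by
  obtain ⟨hΓ, hFTu, hAl, hFTp, hh, hl⟩ := hred
  subst hlen
  have hu : u ≠ [] := List.ne_nil_of_length_pos (by omega)
  have hm : 0 < u.length - 1 := by omega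
  have hchain : ∀ i : ℕ, i + 1 < u.length →
      Q.t (u.getD i (u.head hu)) = Q.s (u.getD (i + 1) (u.head hu)) := by
    intro i hi
    have hc := List.isChain_iff_getElem.mp hΓ i (by omega)
    rw [List.getD_eq_getElem u (u.head hu) (by omega),
      List.getD_eq_getElem u (u.head hu) (by omega)]
    exact hc.1
  have hhead : u.getD 0 (u.head hu) = u.head hu := by
    rw [List.getD_eq_getElem u (u.head hu) (by omega)]
    exact (List.head_eq_getElem_zero hu).symm
  have hlast : u.getD (u.length - 1) (u.head hu) = u.getLast hu := by
    rw [List.getD_eq_getElem u (u.head hu) (by omega)]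
    exact (List.getLast_eq_getElem hu).symm
  have hsx : Q.s (u.head hu) = x := hFTu.2.1 hu
  have hcw0 : ∀ j, j % (u.length - 1) = 0 →
      Q.cycWalk u p hu u.length j = Q.bigWalk (u.head hu) (u.getLast hu) p := by
    intro j h
    simp only [Quiv.cycWalk, if_pos h]
  have hcw1 : ∀ j, j % (u.length - 1) ≠ 0 →
      Q.cycWalk u p hu u.length j =
        Q.arrowWalk (u.getD (u.length - 1 - (j % (u.length - 1))) (u.head hu)) := by
    intro j h
    simp only [Quiv.cycWalk, if_neg h]
  have hps0 : ∀ j, j % (u.length - 1) = 0 → Q.cycPosSrc p u.length j = p.length + 2 := by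
    intro j h
    simp only [Quiv.cycPosSrc, if_pos h]
  have hps1 : ∀ j, j % (u.length - 1) ≠ 0 → Q.cycPosSrc p u.length j = 0 := by
    intro j h
    simp only [Quiv.cycPosSrc, if_neg h]
  have hpt0 : ∀ j, (j + 1) % (u.length - 1) = 0 → Q.cycPosTgt u.length j = 0 := by
    intro j h
    simp only [Quiv.cycPosTgt, if_pos h]
  have hpt1 : ∀ j, (j + 1) % (u.length - 1) ≠ 0 → Q.cycPosTgt u.length j = 1 := by
    intro j h
    simp only [Quiv.cycPosTgt, if_neg h]
  have htopj : ∀ j, ∀ i : Fin ((Q.cycWalk u p hu u.length j).letters.length),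
      ((i : ℕ) + 1 = Q.cycPosSrc p u.length j →
        ((Q.cycWalk u p hu u.length j).letters.get i).2 = false) ∧
      ((i : ℕ) = Q.cycPosSrc p u.length j →
        ((Q.cycWalk u p hu u.length j).letters.get i).2 = true) := by
    intro j
    by_cases h : j % (u.length - 1) = 0
    · simp only [hps0 j h]
      have key : ∀ W : Walk Q, W = Q.bigWalk (u.head hu) (u.getLast hu) p →
          ∀ i : Fin W.letters.length,
            ((i : ℕ) + 1 = p.length + 2 → (W.letters.get i).2 = false) ∧
            ((i : ℕ) = p.length + 2 → (W.letters.get i).2 = true) := by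
        rintro W rfl
        exact htop_big _ _ _
      exact key _ (hcw0 j h)
    · simp only [hps1 j h]
      have key : ∀ W : Walk Q,
          W = Q.arrowWalk (u.getD (u.length - 1 - (j % (u.length - 1))) (u.head hu)) →
          ∀ i : Fin W.letters.length,
            ((i : ℕ) + 1 = 0 → (W.letters.get i).2 = false) ∧
            ((i : ℕ) = 0 → (W.letters.get i).2 = true) := by
        rintro W rfl
        exact htop_arrow _
      exact key _ (hcw1 j h)
  have hsocj : ∀ j, ∀ i : Fin ((Q.cycWalk u p hu u.length (j + 1)).letters.length),
      ((i : ℕ) = Q.cycPosTgt u.length j →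
        ((Q.cycWalk u p hu u.length (j + 1)).letters.get i).2 = false) ∧
      ((i : ℕ) + 1 = Q.cycPosTgt u.length j →
        ((Q.cycWalk u p hu u.length (j + 1)).letters.get i).2 = true) := by
    intro j
    by_cases h : (j + 1) % (u.length - 1) = 0
    · simp only [hpt0 j h]
      have key : ∀ W : Walk Q, W = Q.bigWalk (u.head hu) (u.getLast hu) p →
          ∀ i : Fin W.letters.length,
            ((i : ℕ) = 0 → (W.letters.get i).2 = false) ∧
            ((i : ℕ) + 1 = 0 → (W.letters.get i).2 = true) := by
        rintro W rfl
        exact hsoc_big _ _ _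
      exact key _ (hcw0 (j + 1) h)
    · simp only [hpt1 j h]
      have key : ∀ W : Walk Q,
          W = Q.arrowWalk (u.getD (u.length - 1 - ((j + 1) % (u.length - 1))) (u.head hu)) →
          ∀ i : Fin W.letters.length,
            ((i : ℕ) = 1 → (W.letters.get i).2 = false) ∧
            ((i : ℕ) + 1 = 1 → (W.letters.get i).2 = true) := by
        rintro W rfl
        exact hsoc_arrow _
      exact key _ (hcw1 (j + 1) h)
  have hA : ∀ j, Q.cycPosSrc p u.length j <
      (Q.cycWalk u p hu u.length j).letters.length + 1 := by
    intro j
    by_cases h : j % (u.length - 1) = 0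
    · rw [hcw0 j h, hps0 j h, big_len]; omega
    · rw [hcw1 j h, hps1 j h, arrow_len]; omega
  have hB : ∀ j, Q.cycPosTgt u.length j <
      (Q.cycWalk u p hu u.length (j + 1)).letters.length + 1 := by
    intro j
    by_cases h : (j + 1) % (u.length - 1) = 0
    · rw [hcw0 (j + 1) h, hpt0 j h, big_len]; omega
    · rw [hcw1 (j + 1) h, hpt1 j h, arrow_len]; omega
  have hC : ∀ j, (Q.cycWalk u p hu u.length j).vtx (Q.cycPosSrc p u.length j) =
      (Q.cycWalk u p hu u.length (j + 1)).vtx (Q.cycPosTgt u.length j) := by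
    intro j
    by_cases h0 : j % (u.length - 1) = 0
    · rw [hcw0 j h0, hps0 j h0, big_vtx_last]
      by_cases h1 : (j + 1) % (u.length - 1) = 0
      · rw [hcw0 (j + 1) h1, hpt0 j h1, big_vtx0]
        have hm1 : u.length - 1 = 1 := by
          have hms := mod_succ j (u.length - 1) hm
          by_contra hne
          rw [h0, if_neg (by omega)] at hms
          omega
        have h4 := hchain 0 (by omega)
        rw [hhead] at h4
        rw [show (0 : ℕ) + 1 = u.length - 1 from by omega, hlast] at h4
        exact h4.symm
      · rw [hcw1 (j + 1) h1, hpt1 j h1, arrow_vtx1]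
        have hm2 : u.length - 1 ≠ 1 := by
          intro hq
          rw [hq, Nat.mod_one] at h1
          exact h1 rfl
        have h2 : (j + 1) % (u.length - 1) = 1 := by
          have hms := mod_succ j (u.length - 1) hm
          rw [h0, if_neg (by omega)] at hms
          omega
        rw [h2]
        have h3 := hchain (u.length - 1 - 1) (by omega)
        rw [show u.length - 1 - 1 + 1 = u.length - 1 from by omega, hlast] at h3
        exact h3.symm
    · rw [hcw1 j h0, hps1 j h0, arrow_vtx0]
      by_cases h1 : (j + 1) % (u.length - 1) = 0
      · rw [hcw0 (j + 1) h1, hpt0 j h1, big_vtx0]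
        have h2 : j % (u.length - 1) + 1 = u.length - 1 := by
          have hms := mod_succ j (u.length - 1) hm
          by_contra hne
          rw [if_neg hne] at hms
          omega
        rw [show u.length - 1 - (j % (u.length - 1)) = 1 from by omega]
        have h4 := hchain 0 (by omega)
        rw [hhead] at h4
        exact h4.symm
      · rw [hcw1 (j + 1) h1, hpt1 j h1, arrow_vtx1]
        have h2 : (j + 1) % (u.length - 1) = j % (u.length - 1) + 1 := by
          have hms := mod_succ j (u.length - 1) hm
          by_cases hq : j % (u.length - 1) + 1 = u.length - 1
          · rw [if_pos hq] at hms
            exact absurd hms h1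
          · rw [if_neg hq] at hms
            exact hms
        rw [h2]
        have hr : j % (u.length - 1) < u.length - 1 := Nat.mod_lt _ hm
        have h3 := hchain (u.length - 1 - (j % (u.length - 1) + 1)) (by omega)
        rw [show u.length - 1 - (j % (u.length - 1) + 1) + 1 =
          u.length - 1 - (j % (u.length - 1)) from by omega] at h3
        exact h3.symm
  refine ⟨fun j => entryHom (Q.cycWalk u p hu u.length j) (Q.cycWalk u p hu u.length (j + 1))
    (Q.cycPosSrc p u.length j) (Q.cycPosTgt u.length j) (htopj j) (hsocj j),
    fun j v xx jp => rfl, ?_, ?_⟩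
  · intro j v hnd
    have h1 : (j + 1) % (u.length - 1) ≠ 0 := fun hq => hnd (Nat.dvd_of_mod_eq_zero hq)
    rw [range_entry _ _ _ _ (htopj j) (hsocj j) (hA j) (hB j) (hC j) v,
      ker_entry _ _ _ _ (htopj (j + 1)) (hsocj (j + 1)) (hA (j + 1)) (hB (j + 1))
        (hC (j + 1)) v]
    rw [hps1 (j + 1) h1, hpt1 j h1, hcw1 (j + 1) h1]
    exact supp_eq_van_arrow _ _
  · intro j v hd
    have h1 : (j + 1) % (u.length - 1) = 0 := by
      obtain ⟨c, hc⟩ := hd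
      rw [hc, Nat.mul_mod_right]
    constructor
    · rw [range_entry _ _ _ _ (htopj j) (hsocj j) (hA j) (hB j) (hC j) v,
        ker_entry _ _ _ _ (htopj (j + 1)) (hsocj (j + 1)) (hA (j + 1)) (hB (j + 1))
          (hC (j + 1)) v]
      rw [hps0 (j + 1) h1, hpt0 j h1]
      exact suppAt_le_vanAt (by omega)
    · rw [range_entry _ _ _ _ (htopj j) (hsocj j) (hA j) (hB j) (hC j) v,
        ker_entry _ _ _ _ (htopj (j + 1)) (hsocj (j + 1)) (hA (j + 1)) (hB (j + 1))
          (hC (j + 1)) v]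
      rw [hps0 (j + 1) h1, hpt0 j h1, hcw0 (j + 1) h1]
      exact quot_iso (u.head hu) (u.getLast hu) p hsx v
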